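/- arXiv:1012.0547 — 2 statements merged into one kernel-verified Lean document; each statement's English description precedes it below -/
import Mathlib

section
/- If (S, η, μ) is an opmonoidal (oplax monoidal) monad on a monoidal category C, then the Eilenberg-Moore category of S-algebras carries a monoidal structure such that the forgetful functor U : Alg(S) → C is strict monoidal: the tensor of algebras (A, a) and (B, b) is A ⊗ B with structure map (a ⊗ b) ∘ φ_{A,B} : S(A ⊗ B) → A ⊗ B. -/
/-!
Everything is checked on underlying objects of `C`. The algebra axioms for `(a ⊗ b) ∘ ψ`
follow from the compatibility of `ψ` with `η` and `μ` and the algebra axioms of `a` and `b`;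
naturality of `ψ` makes `f ⊗ g` an algebra map, and coassociativity and counitality of `ψ`
make the associator and unitors of `C` algebra maps. Since algebra maps are determined by
their underlying maps, the coherence axioms are then inherited from `C`.
-/

open CategoryTheory MonoidalCategory

universe v u

namespace CategoryTheory.Monad

class Opmonoidal {C : Type u} [Category.{v} C] [MonoidalCategory C] (S : Monad C) where
  ψ : ∀ X Y : C, S.obj (X ⊗ Y) ⟶ S.obj X ⊗ S.obj Y
  ψbar : S.obj (𝟙_ C) ⟶ 𝟙_ C
  ψ_natural : ∀ {X Y X' Y' : C} (f : X ⟶ X') (g : Y ⟶ Y'),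
    S.map (f ⊗ₘ g) ≫ ψ X' Y' = ψ X Y ≫ (S.map f ⊗ₘ S.map g)
  ψ_coassoc : ∀ X Y Z : C,
    S.map (α_ X Y Z).hom ≫ ψ X (Y ⊗ Z) ≫ (S.obj X ◁ ψ Y Z) =
      ψ (X ⊗ Y) Z ≫ (ψ X Y ▷ S.obj Z) ≫ (α_ (S.obj X) (S.obj Y) (S.obj Z)).hom
  ψ_left : ∀ X : C, S.map (λ_ X).hom = ψ (𝟙_ C) X ≫ (ψbar ▷ S.obj X) ≫ (λ_ (S.obj X)).hom
  ψ_right : ∀ X : C, S.map (ρ_ X).hom = ψ X (𝟙_ C) ≫ (S.obj X ◁ ψbar) ≫ (ρ_ (S.obj X)).hom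
  η_compat : ∀ X Y : C, S.η.app (X ⊗ Y) ≫ ψ X Y = S.η.app X ⊗ₘ S.η.app Y
  η_unit_compat : S.η.app (𝟙_ C) ≫ ψbar = 𝟙 (𝟙_ C)
  μ_compat : ∀ X Y : C,
    S.μ.app (X ⊗ Y) ≫ ψ X Y = S.map (ψ X Y) ≫ ψ (S.obj X) (S.obj Y) ≫ (S.μ.app X ⊗ₘ S.μ.app Y)
  μ_unit_compat : S.μ.app (𝟙_ C) ≫ ψbar = S.map ψbar ≫ ψbar

namespace Opmonoidal

variable {C : Type u} [Category.{v} C] [MonoidalCategory C] {S : Monad C} [S.Opmonoidal]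

def tensorAlgebra (P Q : S.Algebra) : S.Algebra where
  A := P.A ⊗ Q.A
  a := ψ P.A Q.A ≫ (P.a ⊗ₘ Q.a)
  unit := by
    rw [← Category.assoc, η_compat, tensorHom_comp_tensorHom, P.unit, Q.unit]
    exact id_tensorHom_id P.A Q.A
  assoc := by
    rw [← Category.assoc, μ_compat]
    simp only [Category.assoc]
    slice_lhs 3 4 => rw [tensorHom_comp_tensorHom, P.assoc, Q.assoc, ← tensorHom_comp_tensorHom]
    slice_lhs 2 3 => rw [← ψ_natural]
    simp

variable (S) in
def unitAlgebra : S.Algebra where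
  A := 𝟙_ C
  a := ψbar
  unit := η_unit_compat
  assoc := μ_unit_compat

def tensorAlgebraHom {P Q P' Q' : S.Algebra} (f : P ⟶ Q) (g : P' ⟶ Q') :
    tensorAlgebra P P' ⟶ tensorAlgebra Q Q' where
  f := f.f ⊗ₘ g.f
  h := by
    dsimp only [tensorAlgebra]
    rw [← Category.assoc, ψ_natural, Category.assoc, tensorHom_comp_tensorHom, f.h, g.h,
      ← tensorHom_comp_tensorHom, Category.assoc]

def tensorAlgebraAssociator (P Q R : S.Algebra) :
    tensorAlgebra (tensorAlgebra P Q) R ≅ tensorAlgebra P (tensorAlgebra Q R) :=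
  Algebra.isoMk (α_ P.A Q.A R.A) <| by
    dsimp only [tensorAlgebra]
    calc S.map (α_ P.A Q.A R.A).hom ≫ ψ P.A (Q.A ⊗ R.A) ≫ (P.a ⊗ₘ ψ Q.A R.A ≫ (Q.a ⊗ₘ R.a))
        = (S.map (α_ P.A Q.A R.A).hom ≫ ψ P.A (Q.A ⊗ R.A) ≫ (S.obj P.A ◁ ψ Q.A R.A)) ≫
            (P.a ⊗ₘ (Q.a ⊗ₘ R.a)) := by
          simp [← id_tensorHom, tensorHom_comp_tensorHom]
      _ = (ψ (P.A ⊗ Q.A) R.A ≫ (ψ P.A Q.A ▷ S.obj R.A) ≫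
            (α_ (S.obj P.A) (S.obj Q.A) (S.obj R.A)).hom) ≫ (P.a ⊗ₘ (Q.a ⊗ₘ R.a)) := by
          rw [ψ_coassoc]
      _ = (ψ (P.A ⊗ Q.A) R.A ≫ (ψ P.A Q.A ▷ S.obj R.A)) ≫ ((P.a ⊗ₘ Q.a) ⊗ₘ R.a) ≫
            (α_ P.A Q.A R.A).hom := by
          simp only [Category.assoc, associator_naturality]
      _ = _ := by
          rw [← tensorHom_id, Category.assoc, tensorHom_comp_tensorHom_assoc,
            Category.id_comp, Category.assoc]

def tensorAlgebraLeftUnitor (P : S.Algebra) : tensorAlgebra (unitAlgebra S) P ≅ P :=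
  Algebra.isoMk (λ_ P.A) <| by
    dsimp only [tensorAlgebra, unitAlgebra]
    rw [ψ_left, Category.assoc, Category.assoc, ← leftUnitor_naturality,
      ← MonoidalCategory.tensorHom_def_assoc, Category.assoc]

def tensorAlgebraRightUnitor (P : S.Algebra) : tensorAlgebra P (unitAlgebra S) ≅ P :=
  Algebra.isoMk (ρ_ P.A) <| by
    dsimp only [tensorAlgebra, unitAlgebra]
    rw [ψ_right, Category.assoc, Category.assoc, ← rightUnitor_naturality,
      ← tensorHom_def'_assoc, Category.assoc]

instance : MonoidalCategoryStruct S.Algebra where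
  tensorObj := tensorAlgebra
  tensorHom := tensorAlgebraHom
  whiskerLeft P _ _ g := tensorAlgebraHom (𝟙 P) g
  whiskerRight f Q := tensorAlgebraHom f (𝟙 Q)
  tensorUnit := unitAlgebra S
  associator := tensorAlgebraAssociator
  leftUnitor := tensorAlgebraLeftUnitor
  rightUnitor := tensorAlgebraRightUnitor

@[simp]
lemma tensorObj_A (P Q : S.Algebra) : (P ⊗ Q).A = P.A ⊗ Q.A := rfl

@[simp]
lemma tensorHom_f {P Q P' Q' : S.Algebra} (f : P ⟶ Q) (g : P' ⟶ Q') :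
    (f ⊗ₘ g).f = f.f ⊗ₘ g.f := rfl

@[simp]
lemma tensorUnit_A : (𝟙_ S.Algebra).A = 𝟙_ C := rfl

@[simp]
lemma associator_hom_f (P Q R : S.Algebra) : (α_ P Q R).hom.f = (α_ P.A Q.A R.A).hom := rfl

@[simp]
lemma leftUnitor_hom_f (P : S.Algebra) : (λ_ P).hom.f = (λ_ P.A).hom := rfl

@[simp]
lemma rightUnitor_hom_f (P : S.Algebra) : (ρ_ P).hom.f = (ρ_ P.A).hom := rfl

instance : MonoidalCategory S.Algebra :=
  .ofTensorHom

end Opmonoidal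

end CategoryTheory.Monad

/-- If `(S, η, μ)` is an opmonoidal (oplax monoidal) monad on a monoidal
category `C`, then the Eilenberg-Moore category of `S`-algebras carries a monoidal structure
such that the forgetful functor `U : Alg(S) → C` is strict monoidal: the tensor of algebras
`(A, a)` and `(B, b)` is `A ⊗ B` with structure map `(a ⊗ b) ∘ ψ_{A,B}`. -/
theorem stmt13 {C : Type u} [Category.{v} C] [MonoidalCategory C] (S : Monad C)
    (ψ : ∀ X Y : C, S.obj (X ⊗ Y) ⟶ S.obj X ⊗ S.obj Y)
    (ψbar : S.obj (𝟙_ C) ⟶ 𝟙_ C)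
    (ψ_natural : ∀ {X Y X' Y' : C} (f : X ⟶ X') (g : Y ⟶ Y'),
      S.map (f ⊗ₘ g) ≫ ψ X' Y' = ψ X Y ≫ (S.map f ⊗ₘ S.map g))
    (ψ_coassoc : ∀ X Y Z : C,
      S.map (α_ X Y Z).hom ≫ ψ X (Y ⊗ Z) ≫ (S.obj X ◁ ψ Y Z) =
        ψ (X ⊗ Y) Z ≫ (ψ X Y ▷ S.obj Z) ≫ (α_ (S.obj X) (S.obj Y) (S.obj Z)).hom)
    (ψ_left : ∀ X : C,
      S.map (λ_ X).hom = ψ (𝟙_ C) X ≫ (ψbar ▷ S.obj X) ≫ (λ_ (S.obj X)).hom)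
    (ψ_right : ∀ X : C,
      S.map (ρ_ X).hom = ψ X (𝟙_ C) ≫ (S.obj X ◁ ψbar) ≫ (ρ_ (S.obj X)).hom)
    (η_compat : ∀ X Y : C, S.η.app (X ⊗ Y) ≫ ψ X Y = S.η.app X ⊗ₘ S.η.app Y)
    (η_unit_compat : S.η.app (𝟙_ C) ≫ ψbar = 𝟙 (𝟙_ C))
    (μ_compat : ∀ X Y : C,
      S.μ.app (X ⊗ Y) ≫ ψ X Y =
        S.map (ψ X Y) ≫ ψ (S.obj X) (S.obj Y) ≫ (S.μ.app X ⊗ₘ S.μ.app Y))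
    (μ_unit_compat : S.μ.app (𝟙_ C) ≫ ψbar = S.map ψbar ≫ ψbar) :
    ∃ M : MonoidalCategory (Monad.Algebra S),
      -- the tensor of the algebras `(A, a)` and `(B, b)` is `A ⊗ B`
      -- with structure map `(a ⊗ b) ∘ ψ_{A,B}`
      (∀ P Q : Monad.Algebra S,
        (@MonoidalCategoryStruct.tensorObj (Monad.Algebra S) _ M.toMonoidalCategoryStruct
            P Q).A = P.A ⊗ Q.A) ∧
      (∀ P Q : Monad.Algebra S,
        HEq (@MonoidalCategoryStruct.tensorObj (Monad.Algebra S) _ M.toMonoidalCategoryStruct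
              P Q).a
          (ψ P.A Q.A ≫ (P.a ⊗ₘ Q.a))) ∧
      -- the unit object is the unit of `C`
      ((@MonoidalCategoryStruct.tensorUnit (Monad.Algebra S) _ M.toMonoidalCategoryStruct).A =
        𝟙_ C) ∧
      -- the forgetful functor is strict monoidal: the tensor of algebra morphisms has
      -- underlying morphism the tensor of the underlying morphisms
      (∀ (P Q P' Q' : Monad.Algebra S) (f : P ⟶ Q) (g : P' ⟶ Q'),
        HEq (@MonoidalCategoryStruct.tensorHom (Monad.Algebra S) _ M.toMonoidalCategoryStruct
              P Q P' Q' f g).f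
          (f.f ⊗ₘ g.f)) := by
  let _ : S.Opmonoidal := ⟨ψ, ψbar, ψ_natural, ψ_coassoc, ψ_left, ψ_right, η_compat,
    η_unit_compat, μ_compat, μ_unit_compat⟩
  exact ⟨inferInstance, Monad.Opmonoidal.tensorObj_A, fun _ _ => HEq.rfl,
    Monad.Opmonoidal.tensorUnit_A, fun _ _ _ _ f g => heq_of_eq (Monad.Opmonoidal.tensorHom_f f g)⟩
end

section
/- For an opmonoidal monad S on monoidal category C and S-algebras (A,a), (B,b), the map (a ⊗ b) ∘ φ_{A,B} : S(A ⊗ B) → A ⊗ B satisfies the unit and multiplication axioms for an S-algebra structure on A ⊗ B. -/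
/-!
The unit law follows from `η ≫ ψ = η ⊗ η` and the unit laws of `a` and `b`. For the
multiplication law, compatibility with `μ` rewrites `μ ≫ ψ` as `S(ψ) ≫ ψ ≫ (μ ⊗ μ)`,
naturality of `ψ` moves `S(a ⊗ b)` past `ψ`, and the associativity laws of `a` and `b` finish.
-/

open CategoryTheory MonoidalCategory

universe v u

namespace CategoryTheory.Monad

variable {C : Type u} [Category.{v} C] [MonoidalCategory C] {S : Monad C}
  (ψ : ∀ X Y : C, S.obj (X ⊗ Y) ⟶ S.obj X ⊗ S.obj Y) (P Q : Algebra S)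

theorem Algebra.unit_tensor
    (η_compat : ∀ X Y : C, S.η.app (X ⊗ Y) ≫ ψ X Y = S.η.app X ⊗ₘ S.η.app Y) :
    S.η.app (P.A ⊗ Q.A) ≫ ψ P.A Q.A ≫ (P.a ⊗ₘ Q.a) = 𝟙 (P.A ⊗ Q.A) := by
  rw [← Category.assoc, η_compat, tensorHom_comp_tensorHom, P.unit, Q.unit]
  exact id_tensorHom_id _ _

theorem Algebra.assoc_tensor
    (ψ_natural : ∀ {X Y X' Y' : C} (f : X ⟶ X') (g : Y ⟶ Y'),
      S.map (f ⊗ₘ g) ≫ ψ X' Y' = ψ X Y ≫ (S.map f ⊗ₘ S.map g))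
    (μ_compat : ∀ X Y : C,
      S.μ.app (X ⊗ Y) ≫ ψ X Y =
        S.map (ψ X Y) ≫ ψ (S.obj X) (S.obj Y) ≫ (S.μ.app X ⊗ₘ S.μ.app Y)) :
    S.μ.app (P.A ⊗ Q.A) ≫ ψ P.A Q.A ≫ (P.a ⊗ₘ Q.a) =
      S.map (ψ P.A Q.A ≫ (P.a ⊗ₘ Q.a)) ≫ ψ P.A Q.A ≫ (P.a ⊗ₘ Q.a) :=
  calc S.μ.app (P.A ⊗ Q.A) ≫ ψ P.A Q.A ≫ (P.a ⊗ₘ Q.a)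
      = S.map (ψ P.A Q.A) ≫ ψ (S.obj P.A) (S.obj Q.A) ≫
          (S.μ.app P.A ≫ P.a ⊗ₘ S.μ.app Q.A ≫ Q.a) := by
        rw [← Category.assoc, μ_compat]
        simp only [Category.assoc, tensorHom_comp_tensorHom]
    _ = S.map (ψ P.A Q.A) ≫ ψ (S.obj P.A) (S.obj Q.A) ≫
          (S.map P.a ≫ P.a ⊗ₘ S.map Q.a ≫ Q.a) := by
        rw [P.assoc, Q.assoc]
    _ = S.map (ψ P.A Q.A ≫ (P.a ⊗ₘ Q.a)) ≫ ψ P.A Q.A ≫ (P.a ⊗ₘ Q.a) := by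
        rw [S.map_comp, Category.assoc, reassoc_of% (ψ_natural P.a Q.a), tensorHom_comp_tensorHom]

end CategoryTheory.Monad

/-- For an opmonoidal monad `S` on a monoidal category `C` and `S`-algebras
`(A, a)`, `(B, b)`, the map `(a ⊗ b) ∘ ψ_{A,B} : S(A ⊗ B) ⟶ A ⊗ B` satisfies the unit and
multiplication axioms for an `S`-algebra structure on `A ⊗ B`. -/
theorem stmt15 {C : Type u} [Category.{v} C] [MonoidalCategory C] (S : Monad C)
    (ψ : ∀ X Y : C, S.obj (X ⊗ Y) ⟶ S.obj X ⊗ S.obj Y)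
    (ψ_natural : ∀ {X Y X' Y' : C} (f : X ⟶ X') (g : Y ⟶ Y'),
      S.map (f ⊗ₘ g) ≫ ψ X' Y' = ψ X Y ≫ (S.map f ⊗ₘ S.map g))
    (η_compat : ∀ X Y : C, S.η.app (X ⊗ Y) ≫ ψ X Y = S.η.app X ⊗ₘ S.η.app Y)
    (μ_compat : ∀ X Y : C,
      S.μ.app (X ⊗ Y) ≫ ψ X Y =
        S.map (ψ X Y) ≫ ψ (S.obj X) (S.obj Y) ≫ (S.μ.app X ⊗ₘ S.μ.app Y))
    (P Q : Monad.Algebra S) :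
    (S.η.app (P.A ⊗ Q.A) ≫ ψ P.A Q.A ≫ (P.a ⊗ₘ Q.a) = 𝟙 (P.A ⊗ Q.A)) ∧
    (S.μ.app (P.A ⊗ Q.A) ≫ ψ P.A Q.A ≫ (P.a ⊗ₘ Q.a) =
      S.map (ψ P.A Q.A ≫ (P.a ⊗ₘ Q.a)) ≫ ψ P.A Q.A ≫ (P.a ⊗ₘ Q.a)) :=
  ⟨Monad.Algebra.unit_tensor ψ P Q η_compat,
    Monad.Algebra.assoc_tensor ψ P Q ψ_natural μ_compat⟩
end
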